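/- arXiv:1309.2593 — 7 statements merged into one kernel-verified Lean document; each statement's English description precedes it below -/
import Mathlib

section
/- Let F be a submodular set function on a finite set V = {1,...,n} with F(∅) = 0, and let G be a directed acyclic graph on V with parent map π. Define F_G(A) = Σ_{i ∈ A} [F(A ∩ (π_i ∪ {i})) − F(A ∩ π_i)]. Then for all A ⊆ V, F(A) ≤ F_G(A). -/
/-- The graphical-model upper bound `F_G` of a set function `F` induced by a parent map `π`
(of a DAG `G`): `F_G(A) = ∑_{i ∈ A} [F(A ∩ (π_i ∪ {i})) − F(A ∩ π_i)]`. -/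
noncomputable def FG {n : ℕ} (F : Finset (Fin n) → ℝ) (π : Fin n → Finset (Fin n))
    (A : Finset (Fin n)) : ℝ :=
  ∑ i ∈ A, (F (A ∩ insert i (π i)) - F (A ∩ π i))

/-- for a submodular `F` with `F ∅ = 0` and a DAG `G` (given in topological
order, so parents of `i` are `< i`), `F(A) ≤ F_G(A)` for all `A ⊆ V`. -/
theorem dag_upper_bound {n : ℕ} (F : Finset (Fin n) → ℝ)
    (hsub : ∀ A B : Finset (Fin n), F (A ∪ B) + F (A ∩ B) ≤ F A + F B)
    (hF0 : F ∅ = 0)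
    (π : Fin n → Finset (Fin n))
    (htopo : ∀ i : Fin n, ∀ j ∈ π i, j < i)
    (A : Finset (Fin n)) :
    F A ≤ FG F π A := by
  induction A using Finset.strongInduction with
  | _ A ih =>
    rcases A.eq_empty_or_nonempty with rfl | hA
    · simp [FG, hF0]
    · set m := A.max' hA with hm
      set A' := A.erase m with hA'
      have hmA : m ∈ A := A.max'_mem hA
      have hss : A' ⊂ A := Finset.erase_ssubset hmA
      have IH := ih A' hss
      have hlt : ∀ i ∈ A', i < m := fun i hi =>
        lt_of_le_of_ne (A.le_max' i (Finset.mem_of_mem_erase hi)) (Finset.ne_of_mem_erase hi)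
      have hmem : m ∉ A' := Finset.notMem_erase m A
      -- terms for i ∈ A' agree whether we intersect with A or A'
      have hsame : ∀ i ∈ A', (F (A ∩ insert i (π i)) - F (A ∩ π i))
          = (F (A' ∩ insert i (π i)) - F (A' ∩ π i)) := by
        intro i hi
        have h1 : A ∩ insert i (π i) = A' ∩ insert i (π i) := by
          ext j
          simp only [Finset.mem_inter, Finset.mem_insert, hA', Finset.mem_erase]
          constructor
          · rintro ⟨hjA, hj⟩
            have hne : j ≠ m := by
              rcases hj with rfl | hj'
              · exact (hlt j hi).ne
              · exact (lt_trans (htopo i j hj') (hlt i hi)).ne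
            exact ⟨⟨hne, hjA⟩, hj⟩
          · rintro ⟨⟨_, hjA⟩, hj⟩; exact ⟨hjA, hj⟩
        have h2 : A ∩ π i = A' ∩ π i := by
          ext j
          simp only [Finset.mem_inter, hA', Finset.mem_erase]
          constructor
          · rintro ⟨hjA, hj⟩
            exact ⟨⟨(lt_trans (htopo i j hj) (hlt i hi)).ne, hjA⟩, hj⟩
          · rintro ⟨⟨_, hjA⟩, hj⟩; exact ⟨hjA, hj⟩
        rw [h1, h2]
      have hins : A = insert m A' := (Finset.insert_erase hmA).symm
      have hFG : FG F π A
          = (F (A ∩ insert m (π m)) - F (A ∩ π m)) + FG F π A' := by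
        rw [FG, hins, Finset.sum_insert hmem, ← hins, FG]
        congr 1
        exact Finset.sum_congr rfl hsame
      -- submodularity step
      have hkey := hsub A' (A ∩ insert m (π m))
      have hU : A' ∪ (A ∩ insert m (π m)) = A := by
        ext j
        simp only [Finset.mem_union, Finset.mem_inter, Finset.mem_insert, hA',
          Finset.mem_erase]
        constructor
        · rintro (⟨_, hjA⟩ | ⟨hjA, _⟩) <;> exact hjA
        · intro hjA
          by_cases hjm : j = m
          · exact Or.inr ⟨hjA, Or.inl hjm⟩
          · exact Or.inl ⟨hjm, hjA⟩
      have hI : A' ∩ (A ∩ insert m (π m)) = A ∩ π m := by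
        ext j
        simp only [Finset.mem_inter, Finset.mem_insert, hA', Finset.mem_erase]
        constructor
        · rintro ⟨⟨hjm, _⟩, hjA, hj⟩
          rcases hj with rfl | hj
          · exact absurd rfl hjm
          · exact ⟨hjA, hj⟩
        · rintro ⟨hjA, hj⟩
          exact ⟨⟨(htopo m j hj).ne, hjA⟩, hjA, Or.inr hj⟩
      rw [hU, hI] at hkey
      rw [hFG]
      linarith
end

section
/- Let F be a submodular set function on a finite set V, and let G, G' be DAGs on V such that G' is a subgraph of G (i.e., π_i(G') ⊆ π_i(G) for all i ∈ V). Then for all A ⊆ V, F_{G'}(A) ≥ F_G(A). -/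
/-- Diminishing returns: for `S ⊆ T`, `i ∉ T`,
`F (insert i T) - F T ≤ F (insert i S) - F S`. -/
lemma dim_returns {n : ℕ} (F : Finset (Fin n) → ℝ)
    (hsub : ∀ A B : Finset (Fin n), F (A ∪ B) + F (A ∩ B) ≤ F A + F B)
    {S T : Finset (Fin n)} (hST : S ⊆ T) {i : Fin n} (hi : i ∉ T) :
    F (insert i T) - F T ≤ F (insert i S) - F S := by
  have h := hsub T (insert i S)
  have h1 : T ∪ insert i S = insert i T := by
    ext x
    simp only [Finset.mem_union, Finset.mem_insert]
    constructor
    · rintro (hx | hx | hx) <;> [exact Or.inr hx; exact Or.inl hx; exact Or.inr (hST hx)]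
    · rintro (hx | hx) <;> [exact Or.inr (Or.inl hx); exact Or.inl hx]
  have h2 : T ∩ insert i S = S := by
    ext x
    simp only [Finset.mem_inter, Finset.mem_insert]
    constructor
    · rintro ⟨hxT, hx | hx⟩
      · exact absurd (hx ▸ hxT) hi
      · exact hx
    · exact fun hx => ⟨hST hx, Or.inr hx⟩
  rw [h1, h2] at h
  linarith

/-- monotonicity of the bounds. If `G'` is a subgraph of the DAG `G`
(i.e. `π_i(G') ⊆ π_i(G)` for all `i`), then `F_{G'}(A) ≥ F_G(A)` for all `A`. -/
theorem dag_bound_monotone {n : ℕ} (F : Finset (Fin n) → ℝ)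
    (hsub : ∀ A B : Finset (Fin n), F (A ∪ B) + F (A ∩ B) ≤ F A + F B)
    (hF0 : F ∅ = 0)
    (π π' : Fin n → Finset (Fin n))
    (htopo : ∀ i : Fin n, ∀ j ∈ π i, j < i)
    (hsubgraph : ∀ i : Fin n, π' i ⊆ π i)
    (A : Finset (Fin n)) :
    FG F π A ≤ FG F π' A := by
  unfold FG
  apply Finset.sum_le_sum
  intro i hiA
  have hiπ : i ∉ π i := fun h => lt_irrefl i (htopo i i h)
  have hins : ∀ (p : Fin n → Finset (Fin n)), A ∩ insert i (p i) = insert i (A ∩ p i) := by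
    intro p
    ext x
    simp only [Finset.mem_inter, Finset.mem_insert]
    constructor
    · rintro ⟨hxA, hx | hx⟩
      · exact Or.inl hx
      · exact Or.inr ⟨hxA, hx⟩
    · rintro (hx | ⟨hxA, hx⟩)
      · exact ⟨hx ▸ hiA, Or.inl hx⟩
      · exact ⟨hxA, Or.inr hx⟩
  rw [hins π, hins π']
  exact dim_returns F hsub
    (Finset.inter_subset_inter_left (hsubgraph i))
    (by simp [hiπ])
end

section
/- Let F be a submodular set function on V with F(∅)=0 and G a DAG on V with topological ordering 1,...,n (parents of i lie in {1,...,i−1}). If A ⊆ V is an ancestral set of G (i.e., for every i ∈ A, π_i(G) ⊆ A), then 0 ≤ F_G(A) − F(A) ≤ F_G(V) − F(V). -/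
/-- `A` restricted to indices `< k`. -/
def Slt {n : ℕ} (A : Finset (Fin n)) (k : ℕ) : Finset (Fin n) :=
  A.filter (fun j => (j : ℕ) < k)

lemma Slt_succ_of_mem {n : ℕ} {A : Finset (Fin n)} {i : Fin n} (hi : i ∈ A) :
    Slt A ((i : ℕ) + 1) = insert i (Slt A (i : ℕ)) := by
  ext j
  simp only [Slt, Finset.mem_filter, Finset.mem_insert]
  constructor
  · rintro ⟨hjA, hj⟩
    rcases Nat.lt_succ_iff_lt_or_eq.mp hj with h | h
    · exact Or.inr ⟨hjA, h⟩
    · exact Or.inl (Fin.ext h)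
  · rintro (rfl | ⟨hjA, hj⟩)
    · exact ⟨hi, Nat.lt_succ_self _⟩
    · exact ⟨hjA, Nat.lt_succ_of_lt hj⟩

lemma Slt_succ_of_notMem {n : ℕ} {A : Finset (Fin n)} {i : Fin n} (hi : i ∉ A) :
    Slt A ((i : ℕ) + 1) = Slt A (i : ℕ) := by
  ext j
  simp only [Slt, Finset.mem_filter]
  constructor
  · rintro ⟨hjA, hj⟩
    refine ⟨hjA, ?_⟩
    rcases Nat.lt_succ_iff_lt_or_eq.mp hj with h | h
    · exact h
    · exact absurd hjA (by rw [Fin.ext h] at hjA ⊢; exact fun h' => hi hjA)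
  · rintro ⟨hjA, hj⟩
    exact ⟨hjA, Nat.lt_succ_of_lt hj⟩

lemma telescope {n : ℕ} (F : Finset (Fin n) → ℝ) (hF0 : F ∅ = 0) (A : Finset (Fin n)) :
    ∑ i : Fin n, (F (Slt A ((i : ℕ) + 1)) - F (Slt A (i : ℕ))) = F A := by
  rw [Fin.sum_univ_eq_sum_range (fun k => F (Slt A (k + 1)) - F (Slt A k)), Finset.sum_range_sub (fun k => F (Slt A k)) n]
  have h1 : Slt A n = A := by
    ext j; simp [Slt, j.isLt]
  have h2 : Slt A 0 = ∅ := by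
    ext j; simp [Slt]
  rw [h1, h2, hF0, sub_zero]

lemma pi_subset_Slt {n : ℕ} {π : Fin n → Finset (Fin n)}
    (htopo : ∀ i : Fin n, ∀ j ∈ π i, j < i)
    {A : Finset (Fin n)} (hanc : ∀ i ∈ A, π i ⊆ A) {i : Fin n} (hi : i ∈ A) :
    π i ⊆ Slt A (i : ℕ) := by
  intro j hj
  simp only [Slt, Finset.mem_filter]
  exact ⟨hanc i hi hj, htopo i j hj⟩

/-- Key submodular inequality (a). -/
lemma key_a {n : ℕ} (F : Finset (Fin n) → ℝ)
    (hsub : ∀ A B : Finset (Fin n), F (A ∪ B) + F (A ∩ B) ≤ F A + F B)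
    {π : Fin n → Finset (Fin n)} (htopo : ∀ i : Fin n, ∀ j ∈ π i, j < i)
    {A : Finset (Fin n)} (hanc : ∀ i ∈ A, π i ⊆ A) {i : Fin n} (hi : i ∈ A) :
    F (Slt A ((i : ℕ) + 1)) - F (Slt A (i : ℕ)) ≤ F (insert i (π i)) - F (π i) := by
  have hps := pi_subset_Slt htopo hanc hi
  have hnot : i ∉ Slt A (i : ℕ) := by simp [Slt]
  have h := hsub (insert i (π i)) (Slt A (i : ℕ))
  have hu : insert i (π i) ∪ Slt A (i : ℕ) = Slt A ((i : ℕ) + 1) := by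
    rw [Finset.insert_union, Finset.union_eq_right.mpr hps, Slt_succ_of_mem hi]
  have hint : insert i (π i) ∩ Slt A (i : ℕ) = π i := by
    rw [Finset.insert_inter_of_notMem hnot, Finset.inter_eq_left.mpr hps]
  rw [hu, hint] at h
  linarith

/-- Key submodular inequality (b). -/
lemma key_b {n : ℕ} (F : Finset (Fin n) → ℝ)
    (hsub : ∀ A B : Finset (Fin n), F (A ∪ B) + F (A ∩ B) ≤ F A + F B)
    {A : Finset (Fin n)} {i : Fin n} (hi : i ∈ A) :
    F (Slt (Finset.univ) ((i : ℕ) + 1)) - F (Slt (Finset.univ) (i : ℕ))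
      ≤ F (Slt A ((i : ℕ) + 1)) - F (Slt A (i : ℕ)) := by
  have h := hsub (Slt A ((i : ℕ) + 1)) (Slt (Finset.univ) (i : ℕ))
  have hu : Slt A ((i : ℕ) + 1) ∪ Slt (Finset.univ) (i : ℕ) = Slt (Finset.univ) ((i : ℕ) + 1) := by
    ext j
    simp only [Slt, Finset.mem_union, Finset.mem_filter, Finset.mem_univ, true_and]
    constructor
    · rintro (⟨_, hj⟩ | hj)
      · exact hj
      · exact Nat.lt_succ_of_lt hj
    · intro hj
      rcases Nat.lt_succ_iff_lt_or_eq.mp hj with h' | h'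
      · exact Or.inr h'
      · exact Or.inl ⟨by rw [Fin.ext h']; exact hi, hj⟩
  have hint : Slt A ((i : ℕ) + 1) ∩ Slt (Finset.univ) (i : ℕ) = Slt A (i : ℕ) := by
    ext j
    simp only [Slt, Finset.mem_inter, Finset.mem_filter, Finset.mem_univ, true_and]
    constructor
    · rintro ⟨⟨hjA, _⟩, hj⟩
      exact ⟨hjA, hj⟩
    · rintro ⟨hjA, hj⟩
      exact ⟨⟨hjA, Nat.lt_succ_of_lt hj⟩, hj⟩
  rw [hu, hint] at h
  linarith

lemma FG_ancestral {n : ℕ} (F : Finset (Fin n) → ℝ) (π : Fin n → Finset (Fin n))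
    {A : Finset (Fin n)} (hanc : ∀ i ∈ A, π i ⊆ A) :
    FG F π A = ∑ i ∈ A, (F (insert i (π i)) - F (π i)) := by
  unfold FG
  refine Finset.sum_congr rfl (fun i hi => ?_)
  have h1 : A ∩ insert i (π i) = insert i (π i) :=
    Finset.inter_eq_right.mpr (Finset.insert_subset hi (hanc i hi))
  have h2 : A ∩ π i = π i := Finset.inter_eq_right.mpr (hanc i hi)
  rw [h1, h2]

lemma FA_sum {n : ℕ} (F : Finset (Fin n) → ℝ) (hF0 : F ∅ = 0) (A : Finset (Fin n)) :
    F A = ∑ i ∈ A, (F (Slt A ((i : ℕ) + 1)) - F (Slt A (i : ℕ))) := by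
  rw [← telescope F hF0 A]
  symm
  apply Finset.sum_subset (Finset.subset_univ A)
  intro i _ hi
  rw [Slt_succ_of_notMem hi, sub_self]

/-- if `A` is an ancestral set of the DAG `G` (all parents of elements of `A`
are in `A`), then `0 ≤ F_G(A) − F(A) ≤ F_G(V) − F(V)`. -/
theorem dag_bound_ancestral {n : ℕ} (F : Finset (Fin n) → ℝ)
    (hsub : ∀ A B : Finset (Fin n), F (A ∪ B) + F (A ∩ B) ≤ F A + F B)
    (hF0 : F ∅ = 0)
    (π : Fin n → Finset (Fin n))
    (htopo : ∀ i : Fin n, ∀ j ∈ π i, j < i)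
    (A : Finset (Fin n)) (hanc : ∀ i ∈ A, π i ⊆ A) :
    0 ≤ FG F π A - F A ∧ FG F π A - F A ≤ FG F π Finset.univ - F Finset.univ := by
  have hancU : ∀ i ∈ (Finset.univ : Finset (Fin n)), π i ⊆ Finset.univ :=
    fun i _ => Finset.subset_univ _
  have hdA : FG F π A - F A
      = ∑ i ∈ A, ((F (insert i (π i)) - F (π i))
          - (F (Slt A ((i : ℕ) + 1)) - F (Slt A (i : ℕ)))) := by
    rw [FG_ancestral F π hanc, FA_sum F hF0 A, ← Finset.sum_sub_distrib]
  have hdU : FG F π Finset.univ - F Finset.univ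
      = ∑ i : Fin n, ((F (insert i (π i)) - F (π i))
          - (F (Slt (Finset.univ) ((i : ℕ) + 1)) - F (Slt (Finset.univ) (i : ℕ)))) := by
    rw [FG_ancestral F π hancU, FA_sum F hF0 Finset.univ, ← Finset.sum_sub_distrib]
  constructor
  · rw [hdA]
    refine Finset.sum_nonneg (fun i hi => ?_)
    have := key_a F hsub htopo hanc hi
    linarith
  · rw [hdA, hdU, ← Finset.sum_add_sum_compl A]
    have h1 : ∑ i ∈ A, ((F (insert i (π i)) - F (π i))
          - (F (Slt A ((i : ℕ) + 1)) - F (Slt A (i : ℕ))))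
        ≤ ∑ i ∈ A, ((F (insert i (π i)) - F (π i))
          - (F (Slt (Finset.univ) ((i : ℕ) + 1)) - F (Slt (Finset.univ) (i : ℕ)))) := by
      refine Finset.sum_le_sum (fun i hi => ?_)
      have := key_b F hsub hi
      linarith
    have h2 : 0 ≤ ∑ i ∈ Aᶜ, ((F (insert i (π i)) - F (π i))
          - (F (Slt (Finset.univ) ((i : ℕ) + 1)) - F (Slt (Finset.univ) (i : ℕ)))) := by
      refine Finset.sum_nonneg (fun i _ => ?_)
      have := key_a F hsub htopo hancU (Finset.mem_univ i)
      linarith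
    linarith
end

section
/- Let F be a submodular set function on finite V with F(∅)=0, and let G be a directed tree on V, i.e., each vertex has at most one parent. Then the set function F_G defined by F_G(A) = Σ_{i ∈ A} [F(A ∩ (π_i ∪ {i})) − F(A ∩ π_i)] is submodular. -/
lemma FG_term_eq {n : ℕ} (F : Finset (Fin n) → ℝ) (hF0 : F ∅ = 0)
    (π : Fin n → Finset (Fin n))
    (htopo : ∀ i : Fin n, ∀ j ∈ π i, j < i)
    (htree : ∀ i : Fin n, (π i).card ≤ 1)
    (A : Finset (Fin n)) (i : Fin n) (hi : i ∈ A) :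
    F (A ∩ insert i (π i)) - F (A ∩ π i)
      = F {i} + (if π i ⊆ A ∧ (π i).Nonempty
          then F (insert i (π i)) - F {i} - F (π i) else 0) := by
  rcases Finset.eq_empty_or_nonempty (π i) with h | h
  · rw [h]
    simp [Finset.inter_singleton_of_mem hi, hF0]
  · obtain ⟨p, hp⟩ := Finset.card_eq_one.mp (le_antisymm (htree i) h.card_pos)
    have hpi : p ≠ i := by
      have := htopo i p (by simp [hp])
      exact ne_of_lt this
    by_cases hpA : p ∈ A
    · have h1 : A ∩ π i = {p} := by rw [hp]; exact Finset.inter_singleton_of_mem hpA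
      have h2 : A ∩ insert i (π i) = insert i {p} := by
        rw [hp]
        ext x
        simp only [Finset.mem_inter, Finset.mem_insert, Finset.mem_singleton]
        constructor
        · rintro ⟨_, rfl | rfl⟩ <;> simp
        · rintro (rfl | rfl) <;> simp [hi, hpA]
      rw [h1, h2, if_pos ⟨by simp [hp, hpA], h⟩, hp]
      ring
    · have h1 : A ∩ π i = ∅ := by
        rw [hp, Finset.inter_comm, Finset.singleton_inter_of_notMem hpA]
      have h2 : A ∩ insert i (π i) = {i} := by
        rw [hp]
        ext x
        simp only [Finset.mem_inter, Finset.mem_insert, Finset.mem_singleton]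
        constructor
        · rintro ⟨hx, rfl | rfl⟩
          · rfl
          · exact absurd hx hpA
        · rintro rfl; simp [hi]
      rw [h1, h2, if_neg (by simp [hp, hpA]), hF0]
      ring

lemma FG_eq {n : ℕ} (F : Finset (Fin n) → ℝ) (hF0 : F ∅ = 0)
    (π : Fin n → Finset (Fin n))
    (htopo : ∀ i : Fin n, ∀ j ∈ π i, j < i)
    (htree : ∀ i : Fin n, (π i).card ≤ 1)
    (A : Finset (Fin n)) :
    FG F π A = (∑ i ∈ A, F {i})
      + ∑ i : Fin n, (if i ∈ A ∧ π i ⊆ A ∧ (π i).Nonempty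
          then F (insert i (π i)) - F {i} - F (π i) else 0) := by
  unfold FG
  rw [Finset.sum_congr rfl (fun i hi => FG_term_eq F hF0 π htopo htree A i hi),
    Finset.sum_add_distrib]
  congr 1
  have hsplit : ∀ i : Fin n,
      (if i ∈ A ∧ π i ⊆ A ∧ (π i).Nonempty
        then F (insert i (π i)) - F {i} - F (π i) else 0)
      = if i ∈ A then (if π i ⊆ A ∧ (π i).Nonempty
          then F (insert i (π i)) - F {i} - F (π i) else 0) else 0 := by
    intro i
    by_cases h : i ∈ A <;> simp [h]
  simp_rw [hsplit, Finset.sum_ite_mem, Finset.univ_inter]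

/-- if the DAG is a directed tree (each vertex has at most one parent),
then the bound `F_G` is itself submodular. -/
theorem dag_bound_tree_submodular {n : ℕ} (F : Finset (Fin n) → ℝ)
    (hsub : ∀ A B : Finset (Fin n), F (A ∪ B) + F (A ∩ B) ≤ F A + F B)
    (hF0 : F ∅ = 0)
    (π : Fin n → Finset (Fin n))
    (htopo : ∀ i : Fin n, ∀ j ∈ π i, j < i)
    (htree : ∀ i : Fin n, (π i).card ≤ 1) :
    ∀ A B : Finset (Fin n), FG F π (A ∪ B) + FG F π (A ∩ B) ≤ FG F π A + FG F π B := by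
  intro A B
  rw [FG_eq F hF0 π htopo htree A, FG_eq F hF0 π htopo htree B,
    FG_eq F hF0 π htopo htree (A ∪ B), FG_eq F hF0 π htopo htree (A ∩ B)]
  have hmod : (∑ i ∈ A ∪ B, F {i}) + ∑ i ∈ A ∩ B, F {i}
      = (∑ i ∈ A, F {i}) + ∑ i ∈ B, F {i} := Finset.sum_union_inter
  have hquad : (∑ i : Fin n, (if i ∈ A ∪ B ∧ π i ⊆ A ∪ B ∧ (π i).Nonempty
          then F (insert i (π i)) - F {i} - F (π i) else 0))
      + (∑ i : Fin n, (if i ∈ A ∩ B ∧ π i ⊆ A ∩ B ∧ (π i).Nonempty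
          then F (insert i (π i)) - F {i} - F (π i) else 0))
      ≤ (∑ i : Fin n, (if i ∈ A ∧ π i ⊆ A ∧ (π i).Nonempty
          then F (insert i (π i)) - F {i} - F (π i) else 0))
      + (∑ i : Fin n, (if i ∈ B ∧ π i ⊆ B ∧ (π i).Nonempty
          then F (insert i (π i)) - F {i} - F (π i) else 0)) := by
    rw [← Finset.sum_add_distrib, ← Finset.sum_add_distrib]
    apply Finset.sum_le_sum
    intro i _
    set c := F (insert i (π i)) - F {i} - F (π i) with hc
    have hcle : (π i).Nonempty → c ≤ 0 := by
      intro h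
      obtain ⟨p, hp⟩ := Finset.card_eq_one.mp (le_antisymm (htree i) h.card_pos)
      have hpi : p ≠ i := ne_of_lt (htopo i p (by simp [hp]))
      have := hsub {i} {p}
      have hdisj : ({i} : Finset (Fin n)) ∩ {p} = ∅ := by
        simp [Finset.singleton_inter_of_notMem, hpi.symm]
      rw [hdisj, hF0] at this
      have hins : insert i (π i) = {i} ∪ {p} := by
        rw [hp]; rfl
      rw [hc, hins, hp]
      linarith
    by_cases hA : i ∈ A ∧ π i ⊆ A ∧ (π i).Nonempty
    · by_cases hB : i ∈ B ∧ π i ⊆ B ∧ (π i).Nonempty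
      · have hU : i ∈ A ∪ B ∧ π i ⊆ A ∪ B ∧ (π i).Nonempty :=
          ⟨Finset.mem_union_left _ hA.1, hA.2.1.trans Finset.subset_union_left, hA.2.2⟩
        have hI : i ∈ A ∩ B ∧ π i ⊆ A ∩ B ∧ (π i).Nonempty :=
          ⟨Finset.mem_inter.mpr ⟨hA.1, hB.1⟩,
           Finset.subset_inter hA.2.1 hB.2.1, hA.2.2⟩
        rw [if_pos hA, if_pos hB, if_pos hU, if_pos hI]
      · have hU : i ∈ A ∪ B ∧ π i ⊆ A ∪ B ∧ (π i).Nonempty :=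
          ⟨Finset.mem_union_left _ hA.1, hA.2.1.trans Finset.subset_union_left, hA.2.2⟩
        have hI : ¬(i ∈ A ∩ B ∧ π i ⊆ A ∩ B ∧ (π i).Nonempty) := by
          intro h
          exact hB ⟨(Finset.mem_inter.mp h.1).2,
            h.2.1.trans Finset.inter_subset_right, h.2.2⟩
        rw [if_pos hA, if_neg hB, if_pos hU, if_neg hI]
    · by_cases hB : i ∈ B ∧ π i ⊆ B ∧ (π i).Nonempty
      · have hU : i ∈ A ∪ B ∧ π i ⊆ A ∪ B ∧ (π i).Nonempty :=
          ⟨Finset.mem_union_right _ hB.1, hB.2.1.trans Finset.subset_union_right, hB.2.2⟩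
        have hI : ¬(i ∈ A ∩ B ∧ π i ⊆ A ∩ B ∧ (π i).Nonempty) := by
          intro h
          exact hA ⟨(Finset.mem_inter.mp h.1).1,
            h.2.1.trans Finset.inter_subset_left, h.2.2⟩
        rw [if_pos hB, if_neg hA, if_pos hU, if_neg hI]
        linarith
      · have hI : ¬(i ∈ A ∩ B ∧ π i ⊆ A ∩ B ∧ (π i).Nonempty) := by
          intro h
          exact hA ⟨(Finset.mem_inter.mp h.1).1,
            h.2.1.trans Finset.inter_subset_left, h.2.2⟩
        rw [if_neg hA, if_neg hB, if_neg hI]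
        split
        · rename_i hU
          have := hcle hU.2.2
          linarith
        · simp
  linarith
end

section
/- Every set function F on a finite set V with F(∅) = 0 can be written as a difference of two submodular functions, i.e., there exist submodular G, H : 2^V → ℝ with G(∅) = H(∅) = 0 and F = G − H. -/
/-- Cardinality gap for incomparable sets. -/
lemma card_sq_gap {n : ℕ} (A B : Finset (Fin n)) (hAB : ¬ A ⊆ B) (hBA : ¬ B ⊆ A) :
    (A.card : ℝ)^2 + (B.card : ℝ)^2 + 2 ≤ ((A ∪ B).card : ℝ)^2 + ((A ∩ B).card : ℝ)^2 := by
  have hsum : (A ∪ B).card + (A ∩ B).card = A.card + B.card :=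
    Finset.card_union_add_card_inter A B
  have h1 : B.card < (A ∪ B).card := by
    apply Finset.card_lt_card
    refine (Finset.subset_union_right).ssubset_of_ne ?_
    intro h
    exact hAB (Finset.union_eq_right.mp h.symm)
  have h2 : A.card < (A ∪ B).card := by
    apply Finset.card_lt_card
    refine (Finset.subset_union_left).ssubset_of_ne ?_
    intro h
    exact hBA (Finset.union_eq_left.mp h.symm)
  have hsum' : ((A ∪ B).card : ℝ) + ((A ∩ B).card : ℝ) = A.card + B.card := by
    exact_mod_cast hsum
  have h1' : (B.card : ℝ) + 1 ≤ (A ∪ B).card := by exact_mod_cast h1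
  have h2' : (A.card : ℝ) + 1 ≤ (A ∪ B).card := by exact_mod_cast h2
  nlinarith [sq_nonneg ((A ∪ B).card - (A.card : ℝ)), sq_nonneg ((A ∪ B).card - (B.card : ℝ))]

lemma card_sq_mono {n : ℕ} (A B : Finset (Fin n)) :
    (A.card : ℝ)^2 + (B.card : ℝ)^2 ≤ ((A ∪ B).card : ℝ)^2 + ((A ∩ B).card : ℝ)^2 := by
  have hsum : ((A ∪ B).card : ℝ) + ((A ∩ B).card : ℝ) = A.card + B.card := by
    exact_mod_cast Finset.card_union_add_card_inter A B
  have h1 : (A.card : ℝ) ≤ (A ∪ B).card := by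
    exact_mod_cast Finset.card_le_card (Finset.subset_union_left)
  have h2 : (B.card : ℝ) ≤ (A ∪ B).card := by
    exact_mod_cast Finset.card_le_card (Finset.subset_union_right)
  nlinarith

/-- every set function `F` with `F(∅) = 0` on a finite set is a difference
of two submodular functions vanishing at `∅`. -/
theorem diff_of_submodular {n : ℕ} (F : Finset (Fin n) → ℝ) (hF0 : F ∅ = 0) :
    ∃ G H : Finset (Fin n) → ℝ,
      G ∅ = 0 ∧ H ∅ = 0 ∧
      (∀ A B : Finset (Fin n), G (A ∪ B) + G (A ∩ B) ≤ G A + G B) ∧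
      (∀ A B : Finset (Fin n), H (A ∪ B) + H (A ∩ B) ≤ H A + H B) ∧
      (∀ A : Finset (Fin n), F A = G A - H A) := by
  obtain ⟨C, hC⟩ := Finite.exists_le (fun A : Finset (Fin n) => |F A|)
  have hC' : ∀ A, |F A| ≤ C := hC
  have hC0 : 0 ≤ C := le_trans (abs_nonneg _) (hC' ∅)
  set α : ℝ := 2 * C with hα
  have hα0 : 0 ≤ α := by positivity
  refine ⟨fun A => F A - α * (A.card : ℝ)^2, fun A => -α * (A.card : ℝ)^2, ?_, ?_, ?_, ?_, ?_⟩
  · simp [hF0]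
  · simp
  · intro A B
    by_cases hAB : A ⊆ B
    · rw [Finset.union_eq_right.mpr hAB, Finset.inter_eq_left.mpr hAB]
      exact le_of_eq (by ring)
    · by_cases hBA : B ⊆ A
      · rw [Finset.union_eq_left.mpr hBA, Finset.inter_eq_right.mpr hBA]
      · have hgap := card_sq_gap A B hAB hBA
        have h1 := abs_le.mp (hC' (A ∪ B))
        have h2 := abs_le.mp (hC' (A ∩ B))
        have h3 := abs_le.mp (hC' A)
        have h4 := abs_le.mp (hC' B)
        dsimp only
        nlinarith [h1.2, h2.2, h3.1, h4.1, hα, hC0]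
  · intro A B
    have := card_sq_mono A B
    dsimp only
    nlinarith
  · intro A; ring
end

section
/- Let F be a submodular set function on finite V with F(∅)=0 and G a decomposable (triangulated) graph with maximal cliques C(G) and junction-tree separators T(G). Define F_G^{JT}(A) = Σ_{C ∈ C(G)} F(C ∩ A) − Σ_{(C,D) ∈ T(G)} F(C ∩ D ∩ A). If F_G^{elim} is the bound defined via a perfect elimination ordering, F_G^{elim}(A) = Σ_{i} [F(A ∩ (π_i ∪ {i})) − F(A ∩ π_i)] where π_i are the later neighbors in the elimination ordering, then F_G^{JT}(A) = F_G^{elim}(A) for all A ⊆ V. -/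
/-!
Both sides have the form `∑ X g X` over a multiset of vertex sets, with `g X = F (X ∩ A)` and
`g ∅ = 0`. By Möbius inversion on the Boolean lattice such a sum only depends on how many members
of the multiset contain each nonempty `S`. If `S` is not a clique, no member on either side
contains it. If it is, the maximal cliques containing `S` span a subtree of the junction tree (by
the running intersection property), so they outnumber the separators containing `S` by one; and
`S ⊆ insert j (π j)` holds exactly when `S ⊆ π j` or `j = S.min'`.
-/

open Finset

namespace Multiset

lemma card_filter_map_val {α β : Type*} (s : Finset α) (X : α → β) (p : β → Prop)
    [DecidablePred p] : card ((s.val.map X).filter p) = #{x ∈ s | p (X x)} := by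
  rw [filter_map, card_map]
  rfl

variable {β M : Type*} [Fintype β] [DecidableEq β]

lemma sum_map_eq_sum_count_nsmul [AddCommMonoid M] (P : Multiset β) (g : β → M) :
    (P.map g).sum = ∑ b, P.count b • g b := by
  rw [Finset.sum_multiset_map_count]
  exact Finset.sum_subset (subset_univ _) fun b _ hb => by
    rw [count_eq_zero.2 (by simpa using hb), zero_smul]

lemma sum_count_Ici_eq_card_filter (P : Multiset (Finset β)) (S : Finset β) :
    ∑ T ∈ Finset.Ici S, P.count T = card (P.filter (S ⊆ ·)) := by
  rw [← sum_count_eq_card (s := Finset.Ici S) fun T hT => by simpa using (mem_filter.1 hT).2]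
  exact Finset.sum_congr rfl fun T hT => (count_filter_of_pos (by simpa using hT)).symm

lemma count_eq_of_card_filter_superset_eq {P Q : Multiset (Finset β)}
    (h : ∀ S : Finset β, S.Nonempty → card (P.filter (S ⊆ ·)) = card (Q.filter (S ⊆ ·)))
    {S : Finset β} (hS : S.Nonempty) : P.count S = Q.count S := by
  have hmoebius := IncidenceAlgebra.moebius_inversion_top (𝕜 := ℤ)
    (fun T => (P.count T : ℤ) - Q.count T)
    (fun T => (card (P.filter (T ⊆ ·)) : ℤ) - card (Q.filter (T ⊆ ·)))
    (fun T => by simp only [Finset.sum_sub_distrib, ← Nat.cast_sum, sum_count_Ici_eq_card_filter])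
    S
  rw [Finset.sum_eq_zero fun T hT => by
    rw [h T (hS.mono (mem_Ici.1 hT)), sub_self, mul_zero]] at hmoebius
  exact_mod_cast sub_eq_zero.1 hmoebius

theorem sum_map_eq_of_card_filter_superset_eq [AddCommMonoid M] {P Q : Multiset (Finset β)}
    (h : ∀ S : Finset β, S.Nonempty → card (P.filter (S ⊆ ·)) = card (Q.filter (S ⊆ ·)))
    (g : Finset β → M) (hg : g ∅ = 0) : (P.map g).sum = (Q.map g).sum := by
  rw [sum_map_eq_sum_count_nsmul, sum_map_eq_sum_count_nsmul]
  refine Finset.sum_congr rfl fun S _ => ?_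
  rcases S.eq_empty_or_nonempty with rfl | hS
  · simp [hg]
  · rw [count_eq_of_card_filter_superset_eq h hS]

end Multiset

namespace SimpleGraph

variable {V : Type*} {T : SimpleGraph V}

lemma IsAcyclic.mem_support_of_mem_support_path (hT : T.IsAcyclic) {a b k : V}
    (p : T.Path a b) (hk : k ∈ p.1.support) (q : T.Walk a b) : k ∈ q.support := by
  classical
  exact q.support_toPath_subset_support ((hT.subsingleton_path a b).elim p q.toPath ▸ hk)

lemma IsTree.induce_of_forall_walk_mem {s : Set V} (hT : T.IsTree) (hs : s.Nonempty)
    (hconvex : ∀ a ∈ s, ∀ b ∈ s, ∀ k, (∀ p : T.Walk a b, k ∈ p.support) → k ∈ s) :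
    (T.induce s).IsTree := by
  refine ⟨(connected_iff _).2 ⟨?_, hs.to_subtype⟩, hT.isAcyclic.induce s⟩
  rintro ⟨a, ha⟩ ⟨b, hb⟩
  classical
  obtain ⟨p⟩ := hT.connected.preconnected a b
  exact (p.toPath.1.induce s fun k hk => hconvex a ha b hb k
    (hT.isAcyclic.mem_support_of_mem_support_path _ hk)).reachable

lemma card_filter_eq_card_edgeFinset_induce_fromRel {𝒯 : Finset (V × V)}
    (hirrefl : ∀ e ∈ 𝒯, e.1 ≠ e.2) (honce : ∀ e ∈ 𝒯, (e.2, e.1) ∉ 𝒯)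
    (hT : T = fromRel fun a b => (a, b) ∈ 𝒯) (s : Set V) [DecidablePred (· ∈ s)]
    [Fintype (T.induce s).edgeSet] :
    #{e ∈ 𝒯 | e.1 ∈ s ∧ e.2 ∈ s} = #(T.induce s).edgeFinset := by
  subst hT
  refine card_bij (fun e he => s(⟨e.1, (mem_filter.1 he).2.1⟩, ⟨e.2, (mem_filter.1 he).2.2⟩))
    (fun e he => ?_) (fun e he e' he' hee' => ?_) (fun z hz => ?_)
  · rw [mem_edgeFinset, mem_edgeSet, comap_adj, fromRel_adj]
    exact ⟨hirrefl e (mem_filter.1 he).1, Or.inl (mem_filter.1 he).1⟩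
  · rcases Sym2.eq_iff.1 hee' with ⟨h1, h2⟩ | ⟨h1, h2⟩
    · exact Prod.ext (congrArg Subtype.val h1) (congrArg Subtype.val h2)
    · refine absurd (mem_filter.1 he').1 ?_
      rw [show e' = (e.2, e.1) from Prod.ext (congrArg Subtype.val h2).symm
        (congrArg Subtype.val h1).symm]
      exact honce e (mem_filter.1 he).1
  · induction z using Sym2.ind with
    | _ a b =>
      rw [mem_edgeFinset, mem_edgeSet, comap_adj, fromRel_adj] at hz
      rcases hz.2 with h | h
      · exact ⟨(a.1, b.1), mem_filter.2 ⟨h, a.2, b.2⟩, rfl⟩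
      · exact ⟨(b.1, a.1), mem_filter.2 ⟨h, b.2, a.2⟩, Sym2.eq_swap⟩

end SimpleGraph

open SimpleGraph

theorem card_filter_subset_eq_card_filter_subset_inter_add_one {ι V : Type*} [Fintype ι]
    [DecidableEq V] {𝒯 : Finset (ι × ι)} (hirrefl : ∀ e ∈ 𝒯, e.1 ≠ e.2)
    (honce : ∀ e ∈ 𝒯, (e.2, e.1) ∉ 𝒯) {T : SimpleGraph ι}
    (hT : T = fromRel fun i j => (i, j) ∈ 𝒯) (htree : T.IsTree) (c : ι → Finset V)
    (hRIP : ∀ i j k : ι, (∀ p : T.Walk i j, k ∈ p.support) → c i ∩ c j ⊆ c k)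
    {S : Finset V} (hS : ∃ i, S ⊆ c i) :
    #{i | S ⊆ c i} = #{e ∈ 𝒯 | S ⊆ c e.1 ∩ c e.2} + 1 := by
  classical
  have hsubtree : (T.induce {i | S ⊆ c i}).IsTree :=
    htree.induce_of_forall_walk_mem hS fun a ha b hb k hk =>
      (subset_inter ha hb).trans (hRIP a b k hk)
  have hcard := hsubtree.card_edgeFinset
  rw [← card_filter_eq_card_edgeFinset_induce_fromRel hirrefl honce hT] at hcard
  simp only [Set.mem_ofPred_eq, ← subset_inter_iff, Fintype.card_subtype] at hcard
  exact hcard.symm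

lemma card_filter_subset_eq_zero_of_not_isClique {α V : Type*} [DecidableEq V]
    {G : SimpleGraph V} {S : Finset V} (hS : ¬G.IsClique (S : Set V)) (s : Finset α)
    {X : α → Finset V} (hX : ∀ x, G.IsClique (X x : Set V)) : #{x ∈ s | S ⊆ X x} = 0 :=
  card_eq_zero.2 (filter_eq_empty_iff.2 fun x _ h => hS ((hX x).subset (coe_subset.2 h)))

lemma exists_subset_of_isClique {V ι : Type*} [Finite V] {G : SimpleGraph V}
    {c : ι → Finset V} (hall : ∀ D : Finset V, G.IsClique (D : Set V) →
      (∀ D' : Finset V, G.IsClique (D' : Set V) → D ⊆ D' → D' = D) → ∃ i, c i = D)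
    {S : Finset V} (hS : G.IsClique (S : Set V)) : ∃ i, S ⊆ c i := by
  obtain ⟨D, hSD, hD⟩ :=
    (Set.toFinite {D : Finset V | G.IsClique (D : Set V)}).exists_le_maximal hS
  obtain ⟨i, rfl⟩ := hall D hD.1 fun D' hD' hDD' => le_antisymm (hD.2 hD' hDD') hDD'
  exact ⟨i, hSD⟩

section Elimination

variable {V : Type*} [LinearOrder V] [Fintype V] {G : SimpleGraph V} [DecidableRel G.Adj]
  {π : V → Finset V}

lemma isClique_insert_of_laterNeighbors
    (hπ : ∀ i, π i = univ.filter (fun j => G.Adj i j ∧ i < j))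
    (hpeo : ∀ i, G.IsClique (π i : Set V)) (i : V) :
    G.IsClique ((insert i (π i) : Finset V) : Set V) :=
  coe_insert i (π i) ▸ (hpeo i).insert fun j hj _ =>
    (by simpa [hπ] using hj : G.Adj i j ∧ i < j).1

theorem card_filter_subset_insert_laterNeighbors
    (hπ : ∀ i, π i = univ.filter (fun j => G.Adj i j ∧ i < j))
    {S : Finset V} (hS : S.Nonempty) (hcl : G.IsClique (S : Set V)) :
    #{j | S ⊆ insert j (π j)} = #{j | S ⊆ π j} + 1 := by
  have hmem : ∀ i j, j ∈ π i ↔ G.Adj i j ∧ i < j := by simp [hπ]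
  have key : ∀ j, S ⊆ insert j (π j) ↔ j = S.min' hS ∨ S ⊆ π j := by
    intro j
    constructor
    · intro h
      by_cases hj : j ∈ S
      · refine Or.inl (le_antisymm (S.le_min' _ _ fun y hy => ?_) (S.min'_le j hj))
        rcases mem_insert.1 (h hy) with rfl | hy
        exacts [le_rfl, ((hmem j y).1 hy).2.le]
      · exact Or.inr fun v hv => (mem_insert.1 (h hv)).resolve_left (ne_of_mem_of_not_mem hv hj)
    · rintro (rfl | h)
      · intro v hv
        rcases eq_or_ne v (S.min' hS) with rfl | hne
        · exact mem_insert_self _ _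
        · exact mem_insert_of_mem ((hmem _ v).2 ⟨hcl (S.min'_mem hS) hv hne.symm,
            lt_of_le_of_ne (S.min'_le v hv) hne.symm⟩)
      · exact h.trans (subset_insert _ _)
  have hmin : S.min' hS ∉ ({j | S ⊆ π j} : Finset V) := fun h =>
    lt_irrefl _ ((hmem _ _).1 ((mem_filter.1 h).2 (S.min'_mem hS))).2
  rw [← card_insert_of_notMem hmin]
  congr 1
  ext j
  simp [key]

theorem card_superset_junctionTree_eq_card_superset_elimination {ι : Type*} [Fintype ι]
    (hπ : ∀ i, π i = univ.filter (fun j => G.Adj i j ∧ i < j))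
    (hpeo : ∀ i, G.IsClique (π i : Set V))
    {c : ι → Finset V} (hclique : ∀ i, G.IsClique (c i : Set V))
    (hall : ∀ D : Finset V, G.IsClique (D : Set V) →
      (∀ D' : Finset V, G.IsClique (D' : Set V) → D ⊆ D' → D' = D) → ∃ i, c i = D)
    {𝒯 : Finset (ι × ι)} (hirrefl : ∀ e ∈ 𝒯, e.1 ≠ e.2) (honce : ∀ e ∈ 𝒯, (e.2, e.1) ∉ 𝒯)
    {T : SimpleGraph ι} (hT : T = fromRel fun i j => (i, j) ∈ 𝒯) (htree : T.IsTree)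
    (hRIP : ∀ i j k : ι, (∀ p : T.Walk i j, k ∈ p.support) → c i ∩ c j ⊆ c k)
    {S : Finset V} (hS : S.Nonempty) :
    #{i | S ⊆ c i} + #{j | S ⊆ π j} =
      #{e ∈ 𝒯 | S ⊆ c e.1 ∩ c e.2} + #{j | S ⊆ insert j (π j)} := by
  by_cases hcl : G.IsClique (S : Set V)
  · rw [card_filter_subset_eq_card_filter_subset_inter_add_one hirrefl honce hT htree c hRIP
      (exists_subset_of_isClique hall hcl), card_filter_subset_insert_laterNeighbors hπ hS hcl]
    ring
  · simp only [card_filter_subset_eq_zero_of_not_isClique hcl _ hclique,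
      card_filter_subset_eq_zero_of_not_isClique hcl _ hpeo,
      card_filter_subset_eq_zero_of_not_isClique hcl _ (isClique_insert_of_laterNeighbors hπ hpeo),
      card_filter_subset_eq_zero_of_not_isClique hcl _ (X := fun e : ι × ι => c e.1 ∩ c e.2)
        fun e => (hclique e.1).subset (coe_subset.2 inter_subset_left)]

end Elimination

theorem junction_tree_eq_elimination_general {n : ℕ} {ι : Type*} [Fintype ι]
    (G : SimpleGraph (Fin n)) [DecidableRel G.Adj]
    (F : Finset (Fin n) → ℝ)
    (hF0 : F ∅ = 0)
    -- perfect elimination ordering: `π i` = later neighbors of `i`, forming a clique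
    (π : Fin n → Finset (Fin n))
    (hπ : ∀ i, π i = univ.filter (fun j => G.Adj i j ∧ i < j))
    (hpeo : ∀ i, G.IsClique (π i : Set (Fin n)))
    -- `c` enumerates exactly the maximal cliques of `G`
    (c : ι → Finset (Fin n))
    (hclique : ∀ i, G.IsClique (c i : Set (Fin n)))
    (hall : ∀ D : Finset (Fin n), G.IsClique (D : Set (Fin n)) →
      (∀ D' : Finset (Fin n), G.IsClique (D' : Set (Fin n)) → D ⊆ D' → D' = D) →
      ∃ i, c i = D)
    -- junction tree: `𝒯` lists each tree edge once, `T` is a tree on the cliques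
    (𝒯 : Finset (ι × ι))
    (hirrefl : ∀ e ∈ 𝒯, e.1 ≠ e.2)
    (honce : ∀ e ∈ 𝒯, (e.2, e.1) ∉ 𝒯)
    (T : SimpleGraph ι)
    (hT : T = SimpleGraph.fromRel (fun i j => (i, j) ∈ 𝒯))
    (htree : T.IsTree)
    -- running intersection property: any clique-node separating `i` from `j` in the
    -- tree contains `c i ∩ c j`
    (hRIP : ∀ i j k : ι, (∀ p : T.Walk i j, k ∈ p.support) → c i ∩ c j ⊆ c k)
    (A : Finset (Fin n)) :
    (∑ i : ι, F (c i ∩ A)) - (∑ e ∈ 𝒯, F (c e.1 ∩ c e.2 ∩ A)) =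
      ∑ i : Fin n, (F (A ∩ insert i (π i)) - F (A ∩ π i)) := by
  have key := Multiset.sum_map_eq_of_card_filter_superset_eq
    (P := univ.val.map c + univ.val.map π)
    (Q := 𝒯.val.map (fun e => c e.1 ∩ c e.2) + univ.val.map fun j => insert j (π j))
    (fun S hS => by
      simpa only [Multiset.filter_add, Multiset.card_add, Multiset.card_filter_map_val] using
        card_superset_junctionTree_eq_card_superset_elimination hπ hpeo hclique hall hirrefl
          honce hT htree hRIP hS)
    (fun X => F (X ∩ A)) (by simpa using hF0)
  simp only [Multiset.map_add, Multiset.sum_add, Multiset.map_map, Function.comp_def,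
    ← Finset.sum_eq_multiset_sum] at key
  simp only [inter_comm A, Finset.sum_sub_distrib]
  linarith

/-- for a triangulated graph `G` (with, WLOG, the identity order as a
perfect elimination ordering, `π i` being the later neighbors of `i`), a family
`c : ι → Finset (Fin n)` enumerating the maximal cliques of `G`, and a junction tree on
the cliques (a tree `T` with edge list `𝒯` satisfying the running intersection
property), the junction-tree bound and the elimination-ordering bound coincide:
`∑_{C ∈ 𝒞} F(C ∩ A) − ∑_{(C,D) ∈ 𝒯} F(C ∩ D ∩ A)
  = ∑_i [F(A ∩ (π_i ∪ {i})) − F(A ∩ π_i)]`. -/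
theorem junction_tree_eq_elimination {n : ℕ} {ι : Type*} [Fintype ι] [DecidableEq ι]
    (G : SimpleGraph (Fin n)) [DecidableRel G.Adj]
    (F : Finset (Fin n) → ℝ)
    (hsub : ∀ A B : Finset (Fin n), F (A ∪ B) + F (A ∩ B) ≤ F A + F B)
    (hF0 : F ∅ = 0)
    -- perfect elimination ordering: `π i` = later neighbors of `i`, forming a clique
    (π : Fin n → Finset (Fin n))
    (hπ : ∀ i, π i = univ.filter (fun j => G.Adj i j ∧ i < j))
    (hpeo : ∀ i, G.IsClique (π i : Set (Fin n)))
    -- `c` enumerates exactly the maximal cliques of `G`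
    (c : ι → Finset (Fin n)) (hcinj : Function.Injective c)
    (hclique : ∀ i, G.IsClique (c i : Set (Fin n)))
    (hmax : ∀ i, ∀ D : Finset (Fin n), G.IsClique (D : Set (Fin n)) → c i ⊆ D → D = c i)
    (hall : ∀ D : Finset (Fin n), G.IsClique (D : Set (Fin n)) →
      (∀ D' : Finset (Fin n), G.IsClique (D' : Set (Fin n)) → D ⊆ D' → D' = D) →
      ∃ i, c i = D)
    -- junction tree: `𝒯` lists each tree edge once, `T` is a tree on the cliques
    (𝒯 : Finset (ι × ι))
    (hirrefl : ∀ e ∈ 𝒯, e.1 ≠ e.2)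
    (honce : ∀ e ∈ 𝒯, (e.2, e.1) ∉ 𝒯)
    (T : SimpleGraph ι)
    (hT : T = SimpleGraph.fromRel (fun i j => (i, j) ∈ 𝒯))
    (htree : T.IsTree)
    -- running intersection property: any clique-node separating `i` from `j` in the
    -- tree contains `c i ∩ c j`
    (hRIP : ∀ i j k : ι, (∀ p : T.Walk i j, k ∈ p.support) → c i ∩ c j ⊆ c k)
    (A : Finset (Fin n)) :
    (∑ i : ι, F (c i ∩ A)) - (∑ e ∈ 𝒯, F (c e.1 ∩ c e.2 ∩ A)) =
      ∑ i : Fin n, (F (A ∩ insert i (π i)) - F (A ∩ π i)) :=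
  junction_tree_eq_elimination_general G F hF0 π hπ hpeo c hclique hall 𝒯 hirrefl honce T hT htree
    hRIP A
end

section
/- Let F be a submodular set function with F(∅)=0 and G a decomposable graph with clique/junction-tree bound F_G. Then F_G(C) = F(C) for every clique C of G. -/
/-!
Root the junction tree at a maximal clique `c r` containing `Cl` and write every tree edge as
(child, parent). Every walk from the child to `r` passes through the parent, so the running
intersection property gives `c child ∩ Cl ⊆ c child ∩ c r ⊆ c parent`: the separator term of the
edge equals the clique term of the child. The child endpoint is a bijection from the edges onto the
non-root vertices, so all terms cancel except `F (c r ∩ Cl) = F Cl`.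
-/

open Finset

namespace SimpleGraph

variable {ι : Type*} {T : SimpleGraph ι}

theorem IsTree.mem_support_of_adj_of_dist_lt (hT : T.IsTree) {r a b : ι} (hab : T.Adj a b)
    (hd : T.dist r b < T.dist r a) (w : T.Walk a r) : b ∈ w.support := by
  classical
  obtain ⟨q, hq, hqlen⟩ := hT.connected.exists_path_of_dist r b
  have ha : a ∉ q.support := fun ha =>
    ((dist_le _).trans (q.length_takeUntil_le_length ha)).not_gt (hqlen ▸ hd)
  have hb := hT.isAcyclic.mem_support_of_ne_mem_support_of_adj_of_isPath
    w.reverse.bypass_isPath hq hab ha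
  simpa using w.reverse.support_bypass_subset_support hb

theorem IsTree.eq_of_adj_of_dist_lt (hT : T.IsTree) {r a b b' : ι} (hab : T.Adj a b)
    (hab' : T.Adj a b') (hd : T.dist r b < T.dist r a) (hd' : T.dist r b' < T.dist r a) :
    b = b' := by
  obtain ⟨p, hp, -⟩ := hT.connected.exists_path_of_dist a r
  rw [hT.isAcyclic.eq_snd_of_adj_start hp hab (hT.mem_support_of_adj_of_dist_lt hab hd p),
    hT.isAcyclic.eq_snd_of_adj_start hp hab' (hT.mem_support_of_adj_of_dist_lt hab' hd' p)]

theorem Connected.exists_adj_dist_lt (hT : T.Connected) {r a : ι} (hne : a ≠ r) :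
    ∃ b, T.Adj a b ∧ T.dist r b < T.dist r a := by
  obtain ⟨p, -, hp⟩ := hT.exists_path_of_dist a r
  have hnil : ¬p.Nil := Walk.not_nil_of_ne hne
  refine ⟨p.snd, p.adj_snd hnil, ?_⟩
  rw [dist_comm, dist_comm (u := r), ← hp]
  exact (dist_le p.tail).trans_lt (by rw [← p.length_tail_add_one hnil]; omega)

/-- An edge `(a, b)` written as `(child, parent)` for the tree rooted at `r`. -/
noncomputable def orient (T : SimpleGraph ι) (r : ι) (e : ι × ι) : ι × ι :=
  if T.dist r e.1 < T.dist r e.2 then e.swap else e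

theorem orient_eq_or_swap (r : ι) (e : ι × ι) : T.orient r e = e ∨ T.orient r e = e.swap := by
  unfold orient
  split_ifs
  exacts [.inr rfl, .inl rfl]

theorem IsTree.dist_orient_lt (hT : T.IsTree) (r : ι) {e : ι × ι} (he : T.Adj e.1 e.2) :
    T.dist r (T.orient r e).2 < T.dist r (T.orient r e).1 := by
  have := hT.dist_ne_of_adj r he
  unfold orient
  split_ifs with h
  exacts [h, by omega]

theorem adj_orient (r : ι) {e : ι × ι} (he : T.Adj e.1 e.2) :
    T.Adj (T.orient r e).1 (T.orient r e).2 := by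
  rcases orient_eq_or_swap r e with h | h <;> rw [h]
  exacts [he, he.symm]

theorem IsTree.sum_orient_fst {M : Type*} [AddCommMonoid M] [Fintype ι] [DecidableEq ι]
    (hT : T.IsTree) (r : ι) (E : Finset (ι × ι)) (hadj : ∀ e ∈ E, T.Adj e.1 e.2)
    (hswap : ∀ e ∈ E, e.swap ∉ E) (hcover : ∀ a b, T.Adj a b → (a, b) ∈ E ∨ (b, a) ∈ E)
    (f : ι → M) : ∑ e ∈ E, f (T.orient r e).1 = ∑ i ∈ univ.erase r, f i := by
  refine sum_nbij (fun e => (T.orient r e).1) (fun e he => ?_) (fun e he e' he' h => ?_)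
    (fun i hi => ?_) fun _ _ => rfl
  · have hlt := hT.dist_orient_lt r (hadj e he)
    refine mem_erase.2 ⟨fun h => ?_, mem_univ _⟩
    rw [h, dist_self] at hlt
    omega
  · have h2 : T.orient r e = T.orient r e' := by
      have hadj' := adj_orient r (hadj e' he')
      have hlt' := hT.dist_orient_lt r (hadj e' he')
      simp only at h
      rw [← h] at hadj' hlt'
      exact Prod.ext h <| hT.eq_of_adj_of_dist_lt (adj_orient r (hadj e he)) hadj'
        (hT.dist_orient_lt r (hadj e he)) hlt'
    rcases orient_eq_or_swap r e with h1 | h1 <;> rcases orient_eq_or_swap r e' with h1' | h1' <;>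
      rw [h1, h1'] at h2
    · exact h2
    · exact absurd (h2 ▸ he) (hswap e' he')
    · exact absurd (h2 ▸ he') (hswap e he)
    · exact Prod.swap_injective h2
  · obtain ⟨b, hib, hd⟩ := hT.connected.exists_adj_dist_lt (mem_erase.1 hi).1
    rcases hcover i b hib with h | h
    · exact ⟨_, h, by simp [orient, hd.not_gt]⟩
    · exact ⟨_, h, by simp [orient, hd]⟩

theorem IsClique.exists_subset_of_maximal {V : Type*} [Finite V] {G : SimpleGraph V}
    {c : ι → Finset V}
    (hall : ∀ D : Finset V, G.IsClique (D : Set V) →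
      (∀ D' : Finset V, G.IsClique (D' : Set V) → D ⊆ D' → D' = D) → ∃ i, c i = D)
    {s : Finset V} (hs : G.IsClique (s : Set V)) : ∃ i, s ⊆ c i := by
  obtain ⟨D, hsD, hD⟩ :=
    Finite.exists_le_maximal (p := fun D : Finset V => G.IsClique (D : Set V)) hs
  obtain ⟨i, rfl⟩ := hall D hD.prop fun D' hD' hDD' => (hD.le_of_ge hD' hDD').antisymm hDD'
  exact ⟨i, hsD⟩

theorem IsTree.inter_inter_eq_orient_fst (hT : T.IsTree) {V : Type*} [DecidableEq V]
    {c : ι → Finset V}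
    (hRIP : ∀ i j k : ι, (∀ p : T.Walk i j, k ∈ p.support) → c i ∩ c j ⊆ c k)
    {r : ι} {s : Finset V} (hs : s ⊆ c r) {e : ι × ι} (he : T.Adj e.1 e.2) :
    c e.1 ∩ c e.2 ∩ s = c (T.orient r e).1 ∩ s := by
  have hsep : c (T.orient r e).1 ∩ c r ⊆ c (T.orient r e).2 :=
    hRIP _ _ _ (hT.mem_support_of_adj_of_dist_lt (adj_orient r he) (hT.dist_orient_lt r he))
  have hpair : c e.1 ∩ c e.2 = c (T.orient r e).1 ∩ c (T.orient r e).2 := by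
    rcases orient_eq_or_swap r e with h | h <;> rw [h]
    exact inter_comm _ _
  rw [hpair]
  ext x
  simp only [mem_inter]
  exact ⟨fun h => ⟨h.1.1, h.2⟩, fun h => ⟨⟨h.1, hsep (mem_inter.2 ⟨h.1, hs h.2⟩)⟩, h.2⟩⟩

end SimpleGraph

theorem junction_tree_bound_tight_on_cliques_general {n : ℕ} {ι : Type*} [Fintype ι]
    (G : SimpleGraph (Fin n))
    (F : Finset (Fin n) → ℝ)
    -- `c` enumerates exactly the maximal cliques of `G`
    (c : ι → Finset (Fin n))
    (hall : ∀ D : Finset (Fin n), G.IsClique (D : Set (Fin n)) →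
      (∀ D' : Finset (Fin n), G.IsClique (D' : Set (Fin n)) → D ⊆ D' → D' = D) →
      ∃ i, c i = D)
    -- junction tree with running intersection property
    (𝒯 : Finset (ι × ι))
    (hirrefl : ∀ e ∈ 𝒯, e.1 ≠ e.2)
    (honce : ∀ e ∈ 𝒯, (e.2, e.1) ∉ 𝒯)
    (T : SimpleGraph ι)
    (hT : T = SimpleGraph.fromRel (fun i j => (i, j) ∈ 𝒯))
    (htree : T.IsTree)
    (hRIP : ∀ i j k : ι, (∀ p : T.Walk i j, k ∈ p.support) → c i ∩ c j ⊆ c k) :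
    ∀ Cl : Finset (Fin n), G.IsClique (Cl : Set (Fin n)) →
      (∑ i : ι, F (c i ∩ Cl)) - (∑ e ∈ 𝒯, F (c e.1 ∩ c e.2 ∩ Cl)) = F Cl := by
  classical
  intro Cl hCl
  obtain ⟨r, hr⟩ := hCl.exists_subset_of_maximal hall
  have hadj : ∀ e ∈ 𝒯, T.Adj e.1 e.2 := fun e he => by
    rw [hT, SimpleGraph.fromRel_adj]
    exact ⟨hirrefl e he, .inl he⟩
  have hcover : ∀ a b, T.Adj a b → (a, b) ∈ 𝒯 ∨ (b, a) ∈ 𝒯 := fun a b h => by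
    rw [hT, SimpleGraph.fromRel_adj] at h
    exact h.2
  rw [sum_congr rfl fun e he => congrArg F (htree.inter_inter_eq_orient_fst hRIP hr (hadj e he)),
    htree.sum_orient_fst r 𝒯 hadj honce hcover fun i => F (c i ∩ Cl),
    ← add_sum_erase _ _ (mem_univ r), inter_eq_right.2 hr, add_sub_cancel_right]

/-- for a submodular `F` with `F(∅) = 0` and a decomposable (triangulated)
graph `G` with maximal cliques `c : ι → Finset (Fin n)` and junction-tree separators `𝒯`,
the junction-tree bound `F_G(A) = ∑_{C ∈ 𝒞} F(C ∩ A) − ∑_{(C,D) ∈ 𝒯} F(C ∩ D ∩ A)`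
is tight on every clique of `G`: `F_G(Cl) = F(Cl)` whenever `Cl` is a clique. -/
theorem junction_tree_bound_tight_on_cliques {n : ℕ} {ι : Type*} [Fintype ι] [DecidableEq ι]
    (G : SimpleGraph (Fin n)) [DecidableRel G.Adj]
    (F : Finset (Fin n) → ℝ)
    (hsub : ∀ A B : Finset (Fin n), F (A ∪ B) + F (A ∩ B) ≤ F A + F B)
    (hF0 : F ∅ = 0)
    -- `G` is triangulated: the identity order is a perfect elimination ordering
    (hpeo : ∀ i : Fin n,
      G.IsClique ((univ.filter (fun j => G.Adj i j ∧ i < j) : Finset (Fin n)) : Set (Fin n)))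
    -- `c` enumerates exactly the maximal cliques of `G`
    (c : ι → Finset (Fin n)) (hcinj : Function.Injective c)
    (hclique : ∀ i, G.IsClique (c i : Set (Fin n)))
    (hmax : ∀ i, ∀ D : Finset (Fin n), G.IsClique (D : Set (Fin n)) → c i ⊆ D → D = c i)
    (hall : ∀ D : Finset (Fin n), G.IsClique (D : Set (Fin n)) →
      (∀ D' : Finset (Fin n), G.IsClique (D' : Set (Fin n)) → D ⊆ D' → D' = D) →
      ∃ i, c i = D)
    -- junction tree with running intersection property
    (𝒯 : Finset (ι × ι))
    (hirrefl : ∀ e ∈ 𝒯, e.1 ≠ e.2)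
    (honce : ∀ e ∈ 𝒯, (e.2, e.1) ∉ 𝒯)
    (T : SimpleGraph ι)
    (hT : T = SimpleGraph.fromRel (fun i j => (i, j) ∈ 𝒯))
    (htree : T.IsTree)
    (hRIP : ∀ i j k : ι, (∀ p : T.Walk i j, k ∈ p.support) → c i ∩ c j ⊆ c k) :
    ∀ Cl : Finset (Fin n), G.IsClique (Cl : Set (Fin n)) →
      (∑ i : ι, F (c i ∩ Cl)) - (∑ e ∈ 𝒯, F (c e.1 ∩ c e.2 ∩ Cl)) = F Cl :=
  junction_tree_bound_tight_on_cliques_general G F c hall 𝒯 hirrefl honce T hT htree hRIP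
end
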